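/- arXiv:1302.6043 — 5 statements merged into one kernel-verified Lean document; each statement's English description precedes it below -/
import Mathlib

section
/- Let L be a finite set of positive reals with maximum M = max L, and let K be a natural number. If a finite simple graph G has an L-representation J such that for every real x at most K vertices v have left end point ℓ(v) in the half-open unit interval [x,x+1), then every vertex of G has at most K·(|L|+1)·⌈M⌉ neighbors. -/
/-- `ℓ, r` form an interval representation of the simple graph `G`: the vertex `v` is
represented by the half-open interval `[ℓ v, r v)` and two distinct vertices are
adjacent iff their intervals intersect. -/
structure IsIntervalRep {V : Type} (G : SimpleGraph V) (ℓ r : V → ℝ) : Prop where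
  lt : ∀ v, ℓ v < r v
  adj : ∀ u v : V, u ≠ v →
    (G.Adj u v ↔ (Set.Ico (ℓ u) (r u) ∩ Set.Ico (ℓ v) (r v)).Nonempty)

/-!
Two intersecting intervals of length at most `M` have left end points less than `M` apart,
so the left end points of the neighbours of `v` lie in `[ℓ v - ⌈M⌉, ℓ v + ⌈M⌉)`. This window
splits into `2⌈M⌉` unit intervals, each containing at most `K` left end points, and
`2 ≤ |L| + 1`.
-/

open Set

theorem IsIntervalRep.left_lt_right_of_adj {V : Type} {G : SimpleGraph V} {ℓ r : V → ℝ}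
    (hrep : IsIntervalRep G ℓ r) {u v : V} (huv : G.Adj u v) : ℓ u < r v := by
  obtain ⟨x, ⟨hux, -⟩, -, hxv⟩ := (hrep.adj u v huv.ne).mp huv
  exact hux.trans_lt hxv

theorem ncard_preimage_Ico_le_mul {V : Type*} [Finite V] (f : V → ℝ) (K : ℕ)
    (hK : ∀ x : ℝ, {v : V | f v ∈ Ico x (x + 1)}.ncard ≤ K) (a : ℝ) (n : ℕ) :
    {v : V | f v ∈ Ico a (a + n)}.ncard ≤ n * K := by
  induction n with
  | zero => simp
  | succ n ih =>
    have hsplit : {v | f v ∈ Ico a (a + ↑(n + 1))} =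
        {v | f v ∈ Ico a (a + n)} ∪ {v | f v ∈ Ico (a + n) (a + n + 1)} := by
      ext v
      simp only [mem_ofPred_eq, mem_union, Nat.cast_succ, ← add_assoc]
      rw [← mem_union, Ico_union_Ico_eq_Ico (by simp) (by simp)]
    rw [hsplit, Nat.succ_mul]
    exact (ncard_union_le _ _).trans (Nat.add_le_add ih (hK _))

theorem degree_bound_of_sparse_rep_general (L : Finset ℝ) (hLne : L.Nonempty)
    (K : ℕ)
    (V : Type) [Fintype V] (G : SimpleGraph V) (ℓ r : V → ℝ)
    (hrep : IsIntervalRep G ℓ r) (hlen : ∀ v, r v - ℓ v ∈ L)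
    (hK : ∀ x : ℝ, {v : V | ℓ v ∈ Set.Ico x (x + 1)}.ncard ≤ K) :
    ∀ v : V, (G.neighborSet v).ncard ≤ K * (L.card + 1) * ⌈L.max' hLne⌉₊ := by
  intro v
  set m := ⌈L.max' hLne⌉₊
  have hlen_le (u : V) : r u - ℓ u ≤ m := (L.le_max' _ (hlen u)).trans (Nat.le_ceil _)
  have hsub : G.neighborSet v ⊆ {u | ℓ u ∈ Ico (ℓ v - m) (ℓ v - m + ↑(2 * m))} := by
    intro u hvu
    have hv_lt_u : ℓ v < r u := hrep.left_lt_right_of_adj hvu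
    have hu_lt_v : ℓ u < r v := hrep.left_lt_right_of_adj (G.adj_symm hvu)
    have := hlen_le u
    have := hlen_le v
    simp only [mem_ofPred_eq, mem_Ico, Nat.cast_mul, Nat.cast_ofNat]
    constructor <;> linarith
  calc (G.neighborSet v).ncard ≤ _ := ncard_le_ncard hsub (toFinite _)
    _ ≤ 2 * m * K := ncard_preimage_Ico_le_mul ℓ K hK _ _
    _ = K * 2 * m := by ring
    _ ≤ K * (L.card + 1) * m := by
      gcongr
      exact Nat.succ_le_succ hLne.card_pos

/-- If a finite graph `G` has an `L`-representation (`L` a finite set of positive reals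
with maximum `M`) in which every half-open unit interval `[x, x+1)` contains at most `K`
left end points, then every vertex of `G` has at most `K·(|L|+1)·⌈M⌉` neighbours. -/
theorem degree_bound_of_sparse_rep (L : Finset ℝ) (hLne : L.Nonempty)
    (hLpos : ∀ x ∈ L, (0 : ℝ) < x) (K : ℕ)
    (V : Type) [Fintype V] (G : SimpleGraph V) (ℓ r : V → ℝ)
    (hrep : IsIntervalRep G ℓ r) (hlen : ∀ v, r v - ℓ v ∈ L)
    (hK : ∀ x : ℝ, {v : V | ℓ v ∈ Set.Ico x (x + 1)}.ncard ≤ K) :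
    ∀ v : V, (G.neighborSet v).ncard ≤ K * (L.card + 1) * ⌈L.max' hLne⌉₊ :=
  degree_bound_of_sparse_rep_general L hLne K V G ℓ r hrep hlen hK
end

section
/- Let L be a finite set of positive reals and let G be a finite connected L-interval graph of radius at most k, i.e., some vertex of G has graph distance at most k to every vertex of G. Then G has an L-representation in which every interval is contained in [0,(2k+1)·max L); in other words, G is an (L,(2k+1)·max L)-interval graph. -/
/-- Every finite connected `L`-interval graph of radius at most `k` (`L` a finite set of
positive reals) has an `L`-representation with all intervals contained in
`[0, (2k+1)·max L)`, i.e. it is an `(L, (2k+1)·max L)`-interval graph. -/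
theorem bounded_rep_of_bounded_radius (L : Finset ℝ) (hLne : L.Nonempty)
    (hLpos : ∀ x ∈ L, (0 : ℝ) < x)
    (V : Type) [Fintype V] (G : SimpleGraph V) (k : ℕ)
    (hconn : G.Connected)
    (ℓ r : V → ℝ) (hrep : IsIntervalRep G ℓ r) (hlen : ∀ v, r v - ℓ v ∈ L)
    (hrad : ∃ u : V, ∀ v : V, G.dist u v ≤ k) :
    ∃ ℓ' r' : V → ℝ, IsIntervalRep G ℓ' r' ∧ (∀ v, r' v - ℓ' v ∈ L) ∧
      ∀ v, 0 ≤ ℓ' v ∧ r' v ≤ (2 * k + 1) * L.max' hLne := by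
  set M := L.max' hLne with hM
  have hMpos : 0 < M := hLpos _ (L.max'_mem hLne)
  have hlenM : ∀ v, r v - ℓ v ≤ M := fun v => L.le_max' _ (hlen v)
  -- adjacent vertices have left endpoints within M
  have key : ∀ a b : V, G.Adj a b → ℓ a ≤ ℓ b + M := by
    intro a b hab
    obtain ⟨x, ⟨hx1, hx2⟩, ⟨hx3, hx4⟩⟩ := (hrep.adj a b hab.ne).1 hab
    have := hlenM b
    linarith
  -- along a walk, left endpoints differ by at most length * M
  have walkbound : ∀ (a b : V) (w : G.Walk a b),
      ℓ a ≤ ℓ b + w.length * M ∧ ℓ b ≤ ℓ a + w.length * M := by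
    intro a b w
    induction w with
    | nil => simp
    | @cons x y z h p ih =>
      have h1 := key x y h
      have h2 := key y x h.symm
      have hl : (SimpleGraph.Walk.cons h p).length = p.length + 1 :=
        SimpleGraph.Walk.length_cons h p
      rw [hl]
      push_cast
      constructor <;> nlinarith [ih.1, ih.2]
  obtain ⟨u, hu⟩ := hrad
  have bound : ∀ v : V, ℓ u - k * M ≤ ℓ v ∧ ℓ v ≤ ℓ u + k * M := by
    intro v
    obtain ⟨w, hw⟩ := hconn.exists_walk_length_eq_dist u v
    have hd : (w.length : ℝ) ≤ k := by exact_mod_cast hw ▸ hu v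
    have := walkbound u v w
    constructor <;> nlinarith [this.1, this.2]
  refine ⟨fun v => ℓ v + (k * M - ℓ u), fun v => r v + (k * M - ℓ u), ?_, ?_, ?_⟩
  · constructor
    · intro v; have := hrep.lt v; linarith
    · intro a b hab
      rw [hrep.adj a b hab]
      constructor
      · rintro ⟨x, ⟨h1, h2⟩, ⟨h3, h4⟩⟩
        exact ⟨x + (k * M - ℓ u), ⟨by linarith, by linarith⟩, ⟨by linarith, by linarith⟩⟩
      · rintro ⟨x, ⟨h1, h2⟩, ⟨h3, h4⟩⟩
        exact ⟨x - (k * M - ℓ u), ⟨by linarith, by linarith⟩, ⟨by linarith, by linarith⟩⟩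
  · intro v; simpa using hlen v
  · intro v
    have h1 := (bound v).1
    have h2 := (bound v).2
    have h3 := hlenM v
    exact ⟨by show 0 ≤ ℓ v + (k * M - ℓ u); linarith,
      by show r v + (k * M - ℓ u) ≤ (2 * k + 1) * M; nlinarith⟩
end

section
/- Let G be a finite simple graph with N ≥ 3 vertices and clique-width at most k. Then there exists a set S ⊆ V(G) with N/3 ≤ |S| ≤ 2N/3 such that the vertices of S have at most k pairwise distinct neighborhoods outside S, i.e., the set { N_G(v) ∖ S : v ∈ S } has cardinality at most k (where N_G(v) denotes the neighborhood of v in G). -/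
/-- Expressions building labeled graphs (labels are natural numbers; the label `0` plays
the role of the label "1" of the paper): a single vertex carrying the first label,
relabeling all vertices with label `i` to label `j`, adding all edges between vertices
with label `i` and vertices with label `j`, and disjoint union. -/
inductive CW : Type where
  | single : CW
  | relabel (i j : ℕ) (t : CW) : CW
  | addEdges (i j : ℕ) (t : CW) : CW
  | union (s t : CW) : CW

/-- The vertex set of the labeled graph described by a clique-width expression. -/
def CW.verts : CW → Type
  | .single => Unit
  | .relabel _ _ t => t.verts
  | .addEdges _ _ t => t.verts
  | .union s t => s.verts ⊕ t.verts

/-- The labeling of the labeled graph described by a clique-width expression. -/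
def CW.lab : (t : CW) → t.verts → ℕ
  | .single, _ => 0
  | .relabel i j t, v => if t.lab v = i then j else t.lab v
  | .addEdges _ _ t, v => t.lab v
  | .union s t, v => Sum.elim s.lab t.lab v

/-- The underlying simple graph of the labeled graph described by a clique-width
expression. -/
def CW.graph : (t : CW) → SimpleGraph t.verts
  | .single => ⊥
  | .relabel _ _ t => t.graph
  | .addEdges i j t =>
      t.graph ⊔ SimpleGraph.fromRel (fun u v => t.lab u = i ∧ t.lab v = j)
  | .union s t => SimpleGraph.fromRel (Sum.LiftRel s.graph.Adj t.graph.Adj)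

/-- All labels used in the expression are among `0, …, k-1`, i.e. the expression uses at
most `k` labels. -/
def CW.labelsLt (k : ℕ) : CW → Prop
  | .single => 0 < k
  | .relabel i j t => i < k ∧ j < k ∧ t.labelsLt k
  | .addEdges i j t => i < k ∧ j < k ∧ t.labelsLt k
  | .union s t => s.labelsLt k ∧ t.labelsLt k

/-- A simple graph has clique-width at most `k` if it is isomorphic to the graph built
by a clique-width expression using at most `k` labels. -/
def HasCliqueWidthLE {V : Type} (G : SimpleGraph V) (k : ℕ) : Prop :=
  ∃ t : CW, t.labelsLt k ∧ Nonempty (G ≃g t.graph)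

/-! In a clique-width expression, the vertices of a subexpression that carry the same label when
the subexpression is completed are treated alike by every later operation, so they have the same
neighbours outside it: the vertex set of any subexpression has at most `k` distinct outside
neighbourhoods. Descending from the root into a part of a disjoint union as long as that part has
more than `2N/3` vertices reaches a subexpression with between `N/3` and `2N/3` vertices. -/

namespace SimpleGraph

variable {V W α β : Type*}

def outsideTypes (G : SimpleGraph V) (lab : V → α) (S : Set V) : Set (α × Set V) :=
  (fun v => (lab v, G.neighborSet v \ S)) '' S

theorem finite_outsideTypes [Finite V] (G : SimpleGraph V) (lab : V → α) (S : Set V) :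
    (G.outsideTypes lab S).Finite :=
  S.toFinite.image _

theorem outsideTypes_comp (G : SimpleGraph V) (φ : α → β) (lab : V → α) (S : Set V) :
    G.outsideTypes (φ ∘ lab) S = Prod.map φ id '' G.outsideTypes lab S := by
  simp only [outsideTypes, Set.image_image, Prod.map_apply, Function.comp_apply, id]

theorem outsideTypes_univ (G : SimpleGraph V) (lab : V → α) :
    G.outsideTypes lab Set.univ = (fun a => (a, ∅)) '' Set.range lab := by
  simp only [outsideTypes, Set.sdiff_univ, ← Set.image_univ, Set.image_image]

theorem outsideTypes_sup_fromRel (G : SimpleGraph V) (lab : V → α) (i j : α) (S : Set V) :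
    (G ⊔ fromRel fun u v => lab u = i ∧ lab v = j).outsideTypes lab S =
      (fun p => (p.1, p.2 ∪ {v | v ∉ S ∧ (p.1 = i ∧ lab v = j ∨ lab v = i ∧ p.1 = j)})) ''
        G.outsideTypes lab S := by
  rw [outsideTypes, outsideTypes, Set.image_image]
  refine Set.image_congr fun u hu => ?_
  refine Prod.ext rfl (Set.ext fun v => ?_)
  by_cases hv : v ∈ S
  · simp [hv]
  · have huv : u ≠ v := fun h => hv (h ▸ hu)
    simp [hv, huv]

theorem outsideTypes_sum_inl (G : SimpleGraph V) (H : SimpleGraph W) (l₁ : V → α) (l₂ : W → α)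
    (S : Set V) :
    (G ⊕g H).outsideTypes (Sum.elim l₁ l₂) (.inl '' S) =
      Prod.map id (Sum.inl '' ·) '' G.outsideTypes l₁ S := by
  simp only [outsideTypes, Set.image_image, neighborSet_sum_inl, Sum.elim_inl, Prod.map_apply,
    id, ← Set.image_sdiff Sum.inl_injective]

theorem outsideTypes_sum_inr (G : SimpleGraph V) (H : SimpleGraph W) (l₁ : V → α) (l₂ : W → α)
    (S : Set W) :
    (G ⊕g H).outsideTypes (Sum.elim l₁ l₂) (.inr '' S) =
      Prod.map id (Sum.inr '' ·) '' H.outsideTypes l₂ S := by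
  simp only [outsideTypes, Set.image_image, neighborSet_sum_inr, Sum.elim_inr, Prod.map_apply,
    id, ← Set.image_sdiff Sum.inr_injective]

theorem Iso.image_neighborSet_diff_preimage {G : SimpleGraph V} {H : SimpleGraph W}
    (e : G ≃g H) (T : Set W) :
    (fun v => G.neighborSet v \ e ⁻¹' T) '' (e ⁻¹' T) =
      (fun w => e ⁻¹' (H.neighborSet w \ T)) '' T := by
  nth_rw 2 [RelIso.preimage_eq_image_symm]
  rw [Set.image_image]
  refine Set.image_congr fun w _ => ?_
  ext v
  simp [← e.map_adj_iff (v := e.symm w)]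

end SimpleGraph

namespace CW

open SimpleGraph

instance instFinite : ∀ t : CW, Finite t.verts
  | .single => inferInstanceAs (Finite Unit)
  | .relabel _ _ t => t.instFinite
  | .addEdges _ _ t => t.instFinite
  | .union s t =>
      have := s.instFinite
      have := t.instFinite
      inferInstanceAs (Finite (_ ⊕ _))

theorem lab_lt {k : ℕ} : ∀ t : CW, t.labelsLt k → ∀ v, t.lab v < k
  | .single, h, _ => h
  | .relabel i j t, ⟨_, hj, ht⟩, v => by
      change (if t.lab v = i then j else t.lab v) < k
      split_ifs
      exacts [hj, t.lab_lt ht v]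
  | .addEdges _ _ t, ⟨_, _, ht⟩, v => t.lab_lt ht v
  | .union s _, ⟨hs, _⟩, .inl v => s.lab_lt hs v
  | .union _ t, ⟨_, ht⟩, .inr v => t.lab_lt ht v

theorem graph_union (s t : CW) : (union s t).graph = s.graph ⊕g t.graph := by
  ext u v
  change (fromRel (Sum.LiftRel s.graph.Adj t.graph.Adj)).Adj u v ↔ _
  rcases u with u | u <;> rcases v with v | v <;>
    simp only [fromRel_adj, ne_eq, sum_adj, Sum.liftRel_inl_inl, Sum.liftRel_inr_inr,
      Sum.not_liftRel_inl_inr, Sum.not_liftRel_inr_inl, Sum.inl.injEq, Sum.inr.injEq, or_self,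
      and_false]
  all_goals exact ⟨fun h => h.2.elim id Adj.symm, fun h => ⟨h.ne, .inl h⟩⟩

def subtermVerts : (t : CW) → Set (Set t.verts)
  | .single => {Set.univ}
  | .relabel _ _ t => t.subtermVerts
  | .addEdges _ _ t => t.subtermVerts
  | .union s t =>
      insert Set.univ ((Sum.inl '' ·) '' s.subtermVerts ∪ (Sum.inr '' ·) '' t.subtermVerts)

theorem univ_mem_subtermVerts : ∀ t : CW, Set.univ ∈ t.subtermVerts
  | .single => rfl
  | .relabel _ _ t | .addEdges _ _ t => t.univ_mem_subtermVerts
  | .union _ _ => Set.mem_insert _ _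

theorem ncard_outsideTypes_univ_le {k : ℕ} (t : CW) (ht : t.labelsLt k) :
    (t.graph.outsideTypes t.lab Set.univ).ncard ≤ k := by
  rw [outsideTypes_univ]
  calc _ ≤ (Set.range t.lab).ncard := Set.ncard_image_le
    _ ≤ (Set.Iio k).ncard :=
      Set.ncard_le_ncard (Set.range_subset_iff.2 (t.lab_lt ht)) (Set.finite_Iio k)
    _ = k := Set.ncard_Iio_nat k

theorem ncard_outsideTypes_le_of_mem_subtermVerts {k : ℕ} :
    ∀ t : CW, t.labelsLt k → ∀ S ∈ t.subtermVerts, (t.graph.outsideTypes t.lab S).ncard ≤ k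
  | .single, ht, _, rfl => ncard_outsideTypes_univ_le _ ht
  | .relabel i j t, ⟨_, _, ht⟩, S, hS =>
      calc _ = _ := congrArg Set.ncard
            (outsideTypes_comp t.graph (fun a => if a = i then j else a) t.lab S)
        _ ≤ _ := Set.ncard_image_le (finite_outsideTypes t.graph t.lab S)
        _ ≤ k := t.ncard_outsideTypes_le_of_mem_subtermVerts ht S hS
  | .addEdges i j t, ⟨_, _, ht⟩, S, hS =>
      calc _ = _ := congrArg Set.ncard (outsideTypes_sup_fromRel t.graph t.lab i j S)
        _ ≤ _ := Set.ncard_image_le (finite_outsideTypes t.graph t.lab S)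
        _ ≤ k := t.ncard_outsideTypes_le_of_mem_subtermVerts ht S hS
  | .union _ _, hlab, _, .inl rfl => ncard_outsideTypes_univ_le _ hlab
  | .union s t, ⟨hs, _⟩, _, .inr (.inl ⟨S, hS, rfl⟩) => by
      rw [graph_union]
      calc _ = _ := congrArg Set.ncard (outsideTypes_sum_inl s.graph t.graph s.lab t.lab S)
        _ ≤ _ := Set.ncard_image_le (finite_outsideTypes s.graph s.lab S)
        _ ≤ k := s.ncard_outsideTypes_le_of_mem_subtermVerts hs S hS
  | .union s t, ⟨_, ht⟩, _, .inr (.inr ⟨S, hS, rfl⟩) => by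
      rw [graph_union]
      calc _ = _ := congrArg Set.ncard (outsideTypes_sum_inr s.graph t.graph s.lab t.lab S)
        _ ≤ _ := Set.ncard_image_le (finite_outsideTypes t.graph t.lab S)
        _ ≤ k := t.ncard_outsideTypes_le_of_mem_subtermVerts ht S hS

theorem exists_mem_subtermVerts_ncard_mem_Ioc {b : ℚ} (hb : 1 ≤ b) :
    ∀ t : CW, b < Nat.card t.verts →
      ∃ S ∈ t.subtermVerts, b / 2 < S.ncard ∧ (S.ncard : ℚ) ≤ b
  | .single, h => by
      change b < Nat.card Unit at h
      rw [Nat.card_unique, Nat.cast_one] at h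
      linarith
  | .relabel _ _ t, h | .addEdges _ _ t, h => t.exists_mem_subtermVerts_ncard_mem_Ioc hb h
  | .union s t, h => by
      by_cases hs : b < Nat.card s.verts
      · obtain ⟨S, hS, hbS⟩ := s.exists_mem_subtermVerts_ncard_mem_Ioc hb hs
        refine ⟨_, .inr (.inl ⟨S, hS, rfl⟩), ?_⟩
        rwa [Set.ncard_image_of_injective (β := (union s t).verts) S Sum.inl_injective]
      by_cases ht : b < Nat.card t.verts
      · obtain ⟨S, hS, hbS⟩ := t.exists_mem_subtermVerts_ncard_mem_Ioc hb ht
        refine ⟨_, .inr (.inr ⟨S, hS, rfl⟩), ?_⟩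
        rwa [Set.ncard_image_of_injective (β := (union s t).verts) S Sum.inr_injective]
      -- neither side has more than `b` vertices, so the larger one has more than `b / 2`
      push Not at hs ht
      change b < Nat.card (s.verts ⊕ t.verts) at h
      rw [Nat.card_sum, Nat.cast_add] at h
      rcases le_total (Nat.card t.verts : ℚ) (Nat.card s.verts) with hst | hst
      · refine ⟨_, .inr (.inl ⟨_, s.univ_mem_subtermVerts, rfl⟩), ?_⟩
        rw [Set.ncard_image_of_injective (β := (union s t).verts) _ Sum.inl_injective,
          Set.ncard_univ]
        exact ⟨by linarith, hs⟩
      · refine ⟨_, .inr (.inr ⟨_, t.univ_mem_subtermVerts, rfl⟩), ?_⟩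
        rw [Set.ncard_image_of_injective (β := (union s t).verts) _ Sum.inr_injective,
          Set.ncard_univ]
        exact ⟨by linarith, ht⟩

end CW

/-- If a finite graph `G` with `N ≥ 3` vertices has clique-width at most `k`, then there
is a set `S` of vertices with `N/3 ≤ |S| ≤ 2N/3` such that the vertices of `S` have at
most `k` pairwise distinct neighbourhoods outside of `S`. -/
theorem balanced_separator_of_cliqueWidth (V : Type) [Fintype V]
    (G : SimpleGraph V) (k : ℕ) (hN : 3 ≤ Fintype.card V)
    (hcw : HasCliqueWidthLE G k) :
    ∃ S : Set V,
      (Fintype.card V : ℚ) / 3 ≤ (S.ncard : ℚ) ∧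
      (S.ncard : ℚ) ≤ 2 * (Fintype.card V : ℚ) / 3 ∧
      ((fun v => G.neighborSet v \ S) '' S).ncard ≤ k := by
  obtain ⟨t, ht, ⟨e⟩⟩ := hcw
  have hN' : (3 : ℚ) ≤ Fintype.card V := by exact_mod_cast hN
  have hcard : (Nat.card t.verts : ℚ) = Fintype.card V := by
    rw [← Nat.card_congr e.toEquiv, Nat.card_eq_fintype_card]
  obtain ⟨T, hT, hlow, hup⟩ := t.exists_mem_subtermVerts_ncard_mem_Ioc
    (b := 2 * Fintype.card V / 3) (by linarith) (by rw [hcard]; linarith)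
  have hST : (e ⁻¹' T).ncard = T.ncard :=
    Set.ncard_preimage_of_injective_subset_range e.injective (by simp [e.surjective.range_eq])
  refine ⟨e ⁻¹' T, by rw [hST]; linarith, by rwa [hST], ?_⟩
  rw [e.image_neighborSet_diff_preimage]
  calc _ = ((fun p => e ⁻¹' p.2) '' t.graph.outsideTypes t.lab T).ncard := by
        rw [SimpleGraph.outsideTypes, Set.image_image]
    _ ≤ _ := Set.ncard_image_le (SimpleGraph.finite_outsideTypes t.graph t.lab T)
    _ ≤ k := t.ncard_outsideTypes_le_of_mem_subtermVerts ht T hT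
end

section
/- Let L be a set of non-negative reals that is dense in some non-empty open set of reals. Then there exists an FO graph interpretation I=(ν,μ) such that for every finite simple graph G with n ≥ 2 vertices and m edges there exists a finite L-interval graph H with exactly 3n+5+m vertices such that I(H) is isomorphic to G. In particular, the class of all finite graphs has a polynomially bounded FO interpretation in the class of L-interval graphs. -/
open FirstOrder Language

/-- Realization of a graph first-order formula with one free variable in a graph. -/
def gRealize1 {W : Type} (H : SimpleGraph W)
    (ν : Language.graph.Formula (Fin 1)) (w : W) : Prop :=
  letI := H.structure
  ν.Realize (fun _ => w)

/-- Realization of a graph first-order formula with two free variables in a graph. -/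
def gRealize2 {W : Type} (H : SimpleGraph W)
    (μ : Language.graph.Formula (Fin 2)) (x y : W) : Prop :=
  letI := H.structure
  μ.Realize ![x, y]

/-- The graph `I(H)` obtained by applying the FO graph interpretation `I = (ν, μ)` to
`H`: its vertices are the vertices `v` of `H` satisfying `ν(v)` and its edges are the
pairs `{u, v}` of distinct vertices satisfying `μ(u, v)` (for symmetric `μ`, the
symmetrization performed by `SimpleGraph.fromRel` does not change the edge set). -/
def interpGraph {W : Type} (H : SimpleGraph W)
    (ν : Language.graph.Formula (Fin 1)) (μ : Language.graph.Formula (Fin 2)) :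
    SimpleGraph {w : W // gRealize1 H ν w} :=
  SimpleGraph.fromRel (fun u v => gRealize2 H μ u.1 v.1)

/-!
Order the vertices of `G` and represent `G` by intervals of nearly equal length: a vertex
interval `vtx v` and a mark `mark v` for every vertex, a link `link q` for every vertex or edge
`q`, and two anchoring paths `left2 – left1 – left0` and `right1 – right0`. The vertex
intervals form a clique met by `left0`, the marks a clique met by `right0`, and the link of
`q = {a < b}` (or of `q = a = b`) meets all other links, the vertex intervals of the vertices
`≥ a` and the marks of the vertices `≤ b`. Degrees detect the anchors, which makes the three
kinds of pieces first-order definable; `a` and `b` are recovered from `link q` as its least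
vertex neighbour and its greatest mark neighbour, and the links of vertices (those seeing the
fewest marks among the links with the same vertex neighbours) pair `mark b` with `vtx b`. This
defines the edges of `G` on the vertex intervals.

In an integer model all lengths lie in `[D + 1, D + 2n + 1]` with `D` large, so after scaling
they fit into any interval `(α, β)`, `0 < β`, in which `L` is dense, and each length can then be
moved into `L` by less than one unit without changing which intervals meet.
-/

namespace IntervalInterpretation

/-! ### First-order graph formulas with variables indexed by `ℕ` -/

section Formulas

abbrev GFormula := Language.graph.Formula ℕ

def Holds {W α : Type} (H : SimpleGraph W) (φ : Language.graph.Formula α) (v : α → W) :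
    Prop :=
  letI := H.structure
  φ.Realize v

def adjF (i j : ℕ) : GFormula := Relations.formula₂ Language.adj (Term.var i) (Term.var j)

def eqF (i j : ℕ) : GFormula := Term.equal (Term.var i) (Term.var j)

noncomputable def exF (i : ℕ) (φ : GFormula) : GFormula :=
  (φ.relabel fun j => if j = i then Sum.inr () else Sum.inl j).iExs Unit

noncomputable def allF (i : ℕ) (φ : GFormula) : GFormula := ∼(exF i ∼φ)

-- `φ.at1 i` and `φ.at2 i j` put `i` (and `j`) for the free variables `0` (and `1`) of `φ`;
-- `at2` sends every variable other than `0` to `j`.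
abbrev GFormula.at1 (φ : GFormula) (i : ℕ) : GFormula := φ.relabel fun _ => i

abbrev GFormula.at2 (φ : GFormula) (i j : ℕ) : GFormula :=
  φ.relabel fun k => if k = 0 then i else j

variable {W α β : Type} (H : SimpleGraph W)

@[simp] lemma holds_adjF (i j : ℕ) (v : ℕ → W) : Holds H (adjF i j) v ↔ H.Adj (v i) (v j) :=
  Iff.rfl

@[simp] lemma holds_eqF (i j : ℕ) (v : ℕ → W) : Holds H (eqF i j) v ↔ v i = v j :=
  Iff.rfl

@[simp] lemma holds_inf (φ ψ : Language.graph.Formula α) (v : α → W) :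
    Holds H (φ ⊓ ψ) v ↔ Holds H φ v ∧ Holds H ψ v :=
  letI := H.structure; Formula.realize_inf

@[simp] lemma holds_sup (φ ψ : Language.graph.Formula α) (v : α → W) :
    Holds H (φ ⊔ ψ) v ↔ Holds H φ v ∨ Holds H ψ v :=
  letI := H.structure; Formula.realize_sup

@[simp] lemma holds_not (φ : Language.graph.Formula α) (v : α → W) :
    Holds H (∼φ) v ↔ ¬ Holds H φ v :=
  letI := H.structure; Formula.realize_not

@[simp] lemma holds_imp (φ ψ : Language.graph.Formula α) (v : α → W) :
    Holds H (φ ⟹ ψ) v ↔ (Holds H φ v → Holds H ψ v) :=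
  letI := H.structure; Formula.realize_imp

@[simp] lemma holds_iff (φ ψ : Language.graph.Formula α) (v : α → W) :
    Holds H (φ.iff ψ) v ↔ (Holds H φ v ↔ Holds H ψ v) :=
  letI := H.structure; Formula.realize_iff

@[simp] lemma holds_relabel (g : α → β) (φ : Language.graph.Formula α) (v : β → W) :
    Holds H (φ.relabel g) v ↔ Holds H φ (v ∘ g) :=
  letI := H.structure; Formula.realize_relabel

@[simp] lemma holds_exF (i : ℕ) (φ : GFormula) (v : ℕ → W) :
    Holds H (exF i φ) v ↔ ∃ x, Holds H φ (Function.update v i x) := by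
  let _ := H.structure
  have hvars : ∀ x : Unit → W,
      (Sum.elim v x ∘ fun j => if j = i then Sum.inr () else Sum.inl j) =
        Function.update v i (x ()) := by
    intro x; funext j; by_cases hj : j = i <;> simp [hj, Function.update]
  simp only [Holds, exF, Formula.realize_iExs, Formula.realize_relabel, hvars]
  exact ⟨fun ⟨x, hx⟩ => ⟨x (), hx⟩, fun ⟨x, hx⟩ => ⟨fun _ => x, hx⟩⟩

@[simp] lemma holds_allF (i : ℕ) (φ : GFormula) (v : ℕ → W) :
    Holds H (allF i φ) v ↔ ∀ x, Holds H φ (Function.update v i x) := by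
  simp [allF]

lemma holds_iso {H' : SimpleGraph β} (f : H ≃g H') (φ : Language.graph.Formula α)
    (v : α → W) :
    Holds H' φ (f ∘ v) ↔ Holds H φ v := by
  let _ := H.structure
  let _ := H'.structure
  let g : W ≃[Language.graph] β :=
    { toEquiv := f.toEquiv
      map_fun' := fun F => isEmptyElim F
      map_rel' := by rintro _ ⟨⟩ x; exact f.map_adj_iff }
  exact StrongHomClass.realize_formula g φ

end Formulas

/-! ### First-order definable properties of vertices -/

section Recognizers

variable {W : Type} (H : SimpleGraph W)

def IsLeaf (x : W) : Prop := ∃ z, ∀ t, H.Adj x t ↔ t = z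

def IsDegTwo (x : W) : Prop := ∃ a b, a ≠ b ∧ ∀ t, H.Adj x t ↔ t = a ∨ t = b

def HasThreeNbrs (x : W) : Prop :=
  ∃ a b c, a ≠ b ∧ a ≠ c ∧ b ≠ c ∧ H.Adj x a ∧ H.Adj x b ∧ H.Adj x c

def HasLeafNbr (x : W) : Prop := ∃ a, H.Adj x a ∧ IsLeaf H a

def HasDegTwoNbr (x : W) : Prop := ∃ a, H.Adj x a ∧ IsDegTwo H a

def IsVtx (x : W) : Prop := HasThreeNbrs H x ∧ ∃ a, H.Adj x a ∧ HasDegTwoNbr H a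

def IsMark (x : W) : Prop :=
  HasThreeNbrs H x ∧ ¬ HasDegTwoNbr H x ∧ ∃ a, H.Adj x a ∧ HasLeafNbr H a

def IsLink (x : W) : Prop :=
  HasThreeNbrs H x ∧ ¬ IsVtx H x ∧ ¬ IsMark H x ∧ ¬ HasLeafNbr H x ∧ ¬ HasDegTwoNbr H x

def NbhdLE (x y : W) : Prop := ∀ e, e ≠ x → e ≠ y → H.Adj e x → H.Adj e y

def IsLeastVtxNbr (x e : W) : Prop :=
  IsVtx H x ∧ H.Adj e x ∧ ∀ y, IsVtx H y → H.Adj e y → NbhdLE H x y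

def IsGreatestMarkNbr (m e : W) : Prop :=
  IsMark H m ∧ H.Adj e m ∧ ∀ m', IsMark H m' → H.Adj e m' → NbhdLE H m m'

def SameVtxNbrs (e e' : W) : Prop := ∀ x, IsVtx H x → (H.Adj e x ↔ H.Adj e' x)

def IsVtxLink (e : W) : Prop :=
  IsLink H e ∧
    ∀ e', IsLink H e' → SameVtxNbrs H e e' → ∀ m, IsMark H m → H.Adj e m → H.Adj e' m

def Matches (x m : W) : Prop :=
  ∃ p, IsVtxLink H p ∧ IsLeastVtxNbr H x p ∧ IsGreatestMarkNbr H m p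

def EdgeHalf (x y : W) : Prop :=
  ∃ e, IsLink H e ∧ ¬ IsVtxLink H e ∧ IsLeastVtxNbr H x e ∧
    ∃ m, IsGreatestMarkNbr H m e ∧ Matches H y m

def EdgeRel (x y : W) : Prop := EdgeHalf H x y ∨ EdgeHalf H y x

noncomputable def leafF : GFormula := exF 1 (allF 2 ((adjF 0 2).iff (eqF 2 1)))

noncomputable def degTwoF : GFormula :=
  exF 1 (exF 2 (∼(eqF 1 2) ⊓ allF 3 ((adjF 0 3).iff (eqF 3 1 ⊔ eqF 3 2))))

noncomputable def threeNbrsF : GFormula :=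
  exF 1 (exF 2 (exF 3 (∼(eqF 1 2) ⊓ (∼(eqF 1 3) ⊓ (∼(eqF 2 3) ⊓
    (adjF 0 1 ⊓ (adjF 0 2 ⊓ adjF 0 3)))))))

noncomputable def leafNbrF : GFormula := exF 1 (adjF 0 1 ⊓ leafF.at1 1)

noncomputable def degTwoNbrF : GFormula := exF 1 (adjF 0 1 ⊓ degTwoF.at1 1)

noncomputable def vtxF : GFormula := threeNbrsF ⊓ exF 1 (adjF 0 1 ⊓ degTwoNbrF.at1 1)

noncomputable def markF : GFormula :=
  threeNbrsF ⊓ (∼degTwoNbrF ⊓ exF 1 (adjF 0 1 ⊓ leafNbrF.at1 1))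

noncomputable def linkF : GFormula :=
  threeNbrsF ⊓ (∼vtxF ⊓ (∼markF ⊓ (∼leafNbrF ⊓ ∼degTwoNbrF)))

noncomputable def nbhdLEF : GFormula :=
  allF 2 (∼(eqF 2 0) ⟹ ∼(eqF 2 1) ⟹ adjF 2 0 ⟹ adjF 2 1)

noncomputable def leastVtxNbrF : GFormula :=
  vtxF ⊓ (adjF 1 0 ⊓ allF 2 (vtxF.at1 2 ⟹ adjF 1 2 ⟹ nbhdLEF.at2 0 2))

noncomputable def greatestMarkNbrF : GFormula :=
  markF ⊓ (adjF 1 0 ⊓ allF 2 (markF.at1 2 ⟹ adjF 1 2 ⟹ nbhdLEF.at2 0 2))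

noncomputable def sameVtxNbrsF : GFormula := allF 2 (vtxF.at1 2 ⟹ (adjF 0 2).iff (adjF 1 2))

noncomputable def vtxLinkF : GFormula :=
  linkF ⊓ allF 1 (linkF.at1 1 ⟹ sameVtxNbrsF.at2 0 1 ⟹
    allF 2 (markF.at1 2 ⟹ adjF 0 2 ⟹ adjF 1 2))

noncomputable def matchesF : GFormula :=
  exF 2 (vtxLinkF.at1 2 ⊓ (leastVtxNbrF.at2 0 2 ⊓ greatestMarkNbrF.at2 1 2))

noncomputable def edgeHalfF : GFormula :=
  exF 2 (linkF.at1 2 ⊓ (∼(vtxLinkF.at1 2) ⊓ (leastVtxNbrF.at2 0 2 ⊓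
    exF 3 (greatestMarkNbrF.at2 3 2 ⊓ matchesF.at2 1 3))))

noncomputable def edgeRelF : GFormula := edgeHalfF ⊔ edgeHalfF.at2 1 0

variable (v : ℕ → W)

@[simp] lemma holds_leafF : Holds H leafF v ↔ IsLeaf H (v 0) := by simp [leafF, IsLeaf]

@[simp] lemma holds_degTwoF : Holds H degTwoF v ↔ IsDegTwo H (v 0) := by
  simp [degTwoF, IsDegTwo]

@[simp] lemma holds_threeNbrsF : Holds H threeNbrsF v ↔ HasThreeNbrs H (v 0) := by
  simp [threeNbrsF, HasThreeNbrs]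

@[simp] lemma holds_leafNbrF : Holds H leafNbrF v ↔ HasLeafNbr H (v 0) := by
  simp [leafNbrF, HasLeafNbr, Function.comp_def]

@[simp] lemma holds_degTwoNbrF : Holds H degTwoNbrF v ↔ HasDegTwoNbr H (v 0) := by
  simp [degTwoNbrF, HasDegTwoNbr, Function.comp_def]

@[simp] lemma holds_vtxF : Holds H vtxF v ↔ IsVtx H (v 0) := by
  simp [vtxF, IsVtx, Function.comp_def]

@[simp] lemma holds_markF : Holds H markF v ↔ IsMark H (v 0) := by
  simp [markF, IsMark, Function.comp_def]

@[simp] lemma holds_linkF : Holds H linkF v ↔ IsLink H (v 0) := by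
  simp [linkF, IsLink]

@[simp] lemma holds_nbhdLEF : Holds H nbhdLEF v ↔ NbhdLE H (v 0) (v 1) := by
  simp [nbhdLEF, NbhdLE]

@[simp] lemma holds_leastVtxNbrF : Holds H leastVtxNbrF v ↔ IsLeastVtxNbr H (v 0) (v 1) := by
  simp [leastVtxNbrF, IsLeastVtxNbr, Function.comp_def]

@[simp] lemma holds_greatestMarkNbrF :
    Holds H greatestMarkNbrF v ↔ IsGreatestMarkNbr H (v 0) (v 1) := by
  simp [greatestMarkNbrF, IsGreatestMarkNbr, Function.comp_def]

@[simp] lemma holds_sameVtxNbrsF : Holds H sameVtxNbrsF v ↔ SameVtxNbrs H (v 0) (v 1) := by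
  simp [sameVtxNbrsF, SameVtxNbrs, Function.comp_def]

@[simp] lemma holds_vtxLinkF : Holds H vtxLinkF v ↔ IsVtxLink H (v 0) := by
  simp [vtxLinkF, IsVtxLink, Function.comp_def]

@[simp] lemma holds_matchesF : Holds H matchesF v ↔ Matches H (v 0) (v 1) := by
  simp [matchesF, Matches, Function.comp_def]

@[simp] lemma holds_edgeHalfF : Holds H edgeHalfF v ↔ EdgeHalf H (v 0) (v 1) := by
  simp [edgeHalfF, EdgeHalf, Function.comp_def]

@[simp] lemma holds_edgeRelF : Holds H edgeRelF v ↔ EdgeRel H (v 0) (v 1) := by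
  simp [edgeRelF, EdgeRel, Function.comp_def]

end Recognizers

section GeneralGraphs

variable {W : Type} {H : SimpleGraph W} {x : W}

lemma not_hasThreeNbrs_of_adj_imp {p q : W} (h : ∀ t, H.Adj x t → t = p ∨ t = q) :
    ¬ HasThreeNbrs H x := by
  rintro ⟨a, b, c, hab, hac, hbc, ha, hb, hc⟩
  rcases h a ha with rfl | rfl <;> rcases h b hb with rfl | rfl <;>
    rcases h c hc with rfl | rfl <;> simp_all

lemma IsLeaf.not_hasThreeNbrs (h : IsLeaf H x) : ¬ HasThreeNbrs H x := by
  obtain ⟨z, hz⟩ := h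
  exact not_hasThreeNbrs_of_adj_imp (q := z) fun t ht => .inl ((hz t).1 ht)

lemma IsDegTwo.not_hasThreeNbrs (h : IsDegTwo H x) : ¬ HasThreeNbrs H x := by
  obtain ⟨a, b, -, hab⟩ := h
  exact not_hasThreeNbrs_of_adj_imp fun t ht => (hab t).1 ht

lemma inf_lt_sup_of_mem_edgeSet [LinearOrder W] {e : Sym2 W} (he : e ∈ H.edgeSet) :
    e.inf < e.sup := by
  induction e using Sym2.ind with
  | _ a b => simpa using (H.ne_of_adj he).symm

lemma adj_inf_sup_of_mem_edgeSet [LinearOrder W] {e : Sym2 W} (he : e ∈ H.edgeSet) :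
    H.Adj e.inf e.sup := by
  induction e using Sym2.ind with
  | _ a b => rcases le_total a b with hab | hab <;> simp [hab, H.adj_comm b] at he ⊢ <;> exact he

end GeneralGraphs

/-! ### The encoding graph -/

inductive Piece (V E : Type) : Type
  | left2 | left1 | left0
  | vtx (v : V)
  | link (q : V ⊕ E)
  | mark (v : V)
  | right0 | right1

namespace Piece

def equivSum (V E : Type) : Piece V E ≃ Fin 5 ⊕ V ⊕ (V ⊕ E) ⊕ V where
  toFun
    | left2 => .inl 0
    | left1 => .inl 1
    | left0 => .inl 2
    | right0 => .inl 3
    | right1 => .inl 4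
    | vtx v => .inr (.inl v)
    | link q => .inr (.inr (.inl q))
    | mark v => .inr (.inr (.inr v))
  invFun
    | .inl i => ![left2, left1, left0, right0, right1] i
    | .inr (.inl v) => vtx v
    | .inr (.inr (.inl q)) => link q
    | .inr (.inr (.inr v)) => mark v
  left_inv t := by cases t <;> rfl
  right_inv x := by
    rcases x with i | v | q | v
    · fin_cases i <;> rfl
    all_goals rfl

instance {V E : Type} [Fintype V] [Fintype E] : Fintype (Piece V E) :=
  Fintype.ofEquiv _ (equivSum V E).symm

lemma card_edgeSet {V : Type} [Fintype V] (G : SimpleGraph V) [Fintype G.edgeSet] :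
    Fintype.card (Piece V G.edgeSet) = 3 * Fintype.card V + 5 + G.edgeSet.ncard := by
  rw [Fintype.card_congr (equivSum V G.edgeSet), ← Nat.card_coe_set_eq,
    Nat.card_eq_fintype_card]
  simp only [Fintype.card_sum, Fintype.card_fin]
  ring

variable {V : Type} [LinearOrder V]

section

variable (G : SimpleGraph V)

def lo : V ⊕ G.edgeSet → V := Sum.elim id fun e => e.1.inf

def hi : V ⊕ G.edgeSet → V := Sum.elim id fun e => e.1.sup

-- Each adjacent pair is listed once, in left-to-right order of the intervals.
def Meets : Piece V G.edgeSet → Piece V G.edgeSet → Prop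
  | left2, left1 | left1, left0 | left0, vtx _ | vtx _, vtx _ | link _, link _ | mark _, mark _
  | mark _, right0 | right0, right1 => True
  | vtx v, link q => lo G q ≤ v
  | link q, mark v => v ≤ hi G q
  | _, _ => False

end

def _root_.SimpleGraph.encoding (G : SimpleGraph V) : SimpleGraph (Piece V G.edgeSet) :=
  SimpleGraph.fromRel (Meets G)

variable {G : SimpleGraph V}

@[simp] lemma lo_inl (v : V) : lo G (.inl v) = v := rfl

@[simp] lemma hi_inl (v : V) : hi G (.inl v) = v := rfl

@[simp] lemma hi_inr (e : G.edgeSet) : hi G (.inr e) = e.1.sup := rfl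

lemma lo_le_hi (q : V ⊕ G.edgeSet) : lo G q ≤ hi G q := by
  rcases q with v | e
  · exact le_rfl
  · exact (inf_lt_sup_of_mem_edgeSet e.2).le

lemma encoding_adj {s t : Piece V G.edgeSet} :
    G.encoding.Adj s t ↔ s ≠ t ∧ (Meets G s t ∨ Meets G t s) :=
  SimpleGraph.fromRel_adj ..

@[simp] lemma adj_left2 {t : Piece V G.edgeSet} : G.encoding.Adj t left2 ↔ t = left1 := by
  cases t <;> simp [encoding_adj, Meets]

@[simp] lemma adj_left1 {t : Piece V G.edgeSet} :
    G.encoding.Adj t left1 ↔ t = left2 ∨ t = left0 := by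
  cases t <;> simp [encoding_adj, Meets]

@[simp] lemma adj_right1 {t : Piece V G.edgeSet} : G.encoding.Adj t right1 ↔ t = right0 := by
  cases t <;> simp [encoding_adj, Meets]

@[simp] lemma adj_link_vtx {q : V ⊕ G.edgeSet} {v : V} :
    G.encoding.Adj (link q) (vtx v) ↔ lo G q ≤ v := by
  simp [encoding_adj, Meets]

@[simp] lemma adj_link_mark {q : V ⊕ G.edgeSet} {v : V} :
    G.encoding.Adj (link q) (mark v) ↔ v ≤ hi G q := by
  simp [encoding_adj, Meets]

lemma nbhdLE_vtx_iff {a b : V} : NbhdLE G.encoding (vtx a) (vtx b) ↔ a ≤ b := by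
  refine ⟨fun h => ?_, fun hab e _ _ hea => ?_⟩
  · simpa using h (link (.inl a)) (by simp) (by simp) (by simp)
  · cases e <;> simp_all [encoding_adj, Meets]
    exact le_trans hea hab

lemma nbhdLE_mark_iff {a b : V} : NbhdLE G.encoding (mark a) (mark b) ↔ b ≤ a := by
  refine ⟨fun h => ?_, fun hba e _ _ hea => ?_⟩
  · simpa using h (link (.inl a)) (by simp) (by simp) (by simp)
  · cases e <;> simp_all [encoding_adj, Meets]
    exact le_trans hba hea

variable [Nontrivial V]

lemma hasThreeNbrs_iff {x : Piece V G.edgeSet} :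
    HasThreeNbrs G.encoding x ↔ x ≠ left2 ∧ x ≠ left1 ∧ x ≠ right1 := by
  constructor
  · intro h
    refine ⟨?_, ?_, ?_⟩ <;> rintro rfl
    · exact not_hasThreeNbrs_of_adj_imp (q := left1) (fun t ht => .inl (adj_left2.1 ht.symm)) h
    · exact not_hasThreeNbrs_of_adj_imp (fun t ht => adj_left1.1 ht.symm) h
    · exact not_hasThreeNbrs_of_adj_imp (q := right0) (fun t ht => .inl (adj_right1.1 ht.symm)) h
  · rintro ⟨h2, h1, h1'⟩
    obtain ⟨a, b, hab⟩ := exists_pair_ne V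
    cases x with
    | left2 => exact absurd rfl h2
    | left1 => exact absurd rfl h1
    | right1 => exact absurd rfl h1'
    | left0 => exact ⟨left1, vtx a, vtx b, by simp [encoding_adj, hab, Meets]⟩
    | vtx v =>
      obtain ⟨w, hw⟩ := exists_ne v
      exact ⟨left0, link (.inl v), vtx w, by simp [encoding_adj, hw.symm, Meets]⟩
    | link q =>
      obtain ⟨w, hw⟩ := exists_ne (lo G q)
      have hq : q ≠ .inl w := by rintro rfl; exact hw rfl
      exact ⟨vtx (lo G q), mark (hi G q), link (.inl w), by simp [encoding_adj, Meets, hq]⟩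
    | mark v =>
      obtain ⟨w, hw⟩ := exists_ne v
      exact ⟨right0, link (.inl v), mark w, by simp [encoding_adj, hw.symm, Meets]⟩
    | right0 => exact ⟨right1, mark a, mark b, by simp [encoding_adj, hab, Meets]⟩

lemma isLeaf_iff {x : Piece V G.edgeSet} : IsLeaf G.encoding x ↔ x = left2 ∨ x = right1 := by
  constructor
  · intro h
    by_contra hx
    rw [not_or] at hx
    obtain rfl : x = left1 := by
      by_contra h1
      exact h.not_hasThreeNbrs (hasThreeNbrs_iff.2 ⟨hx.1, h1, hx.2⟩)
    obtain ⟨z, hz⟩ := h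
    have h2 := (hz left2).1 (by simp [encoding_adj, Meets])
    have h0 := (hz left0).1 (by simp [encoding_adj, Meets])
    exact absurd (h2.trans h0.symm) (by simp)
  · rintro (rfl | rfl)
    · exact ⟨left1, fun t => by rw [SimpleGraph.adj_comm, adj_left2]⟩
    · exact ⟨right0, fun t => by rw [SimpleGraph.adj_comm, adj_right1]⟩

lemma isDegTwo_iff {x : Piece V G.edgeSet} : IsDegTwo G.encoding x ↔ x = left1 := by
  constructor
  · intro h
    by_contra h1
    obtain ⟨a, b, hab, hx⟩ := h
    have hx' : x = left2 ∨ x = right1 := by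
      by_contra hx'
      rw [not_or] at hx'
      exact IsDegTwo.not_hasThreeNbrs ⟨a, b, hab, hx⟩
        (hasThreeNbrs_iff.2 ⟨hx'.1, h1, hx'.2⟩)
    have ha := (hx a).2 (.inl rfl)
    have hb := (hx b).2 (.inr rfl)
    rcases hx' with rfl | rfl <;>
      simp only [G.encoding.adj_comm left2, G.encoding.adj_comm right1, adj_left2,
        adj_right1] at ha hb <;>
      exact hab (ha.trans hb.symm)
  · rintro rfl
    exact ⟨left2, left0, by simp, fun t => by rw [SimpleGraph.adj_comm, adj_left1]⟩

@[simp] lemma hasDegTwoNbr_iff {x : Piece V G.edgeSet} :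
    HasDegTwoNbr G.encoding x ↔ G.encoding.Adj x left1 := by
  simp [HasDegTwoNbr, isDegTwo_iff]

@[simp] lemma hasLeafNbr_iff {x : Piece V G.edgeSet} :
    HasLeafNbr G.encoding x ↔ G.encoding.Adj x left2 ∨ G.encoding.Adj x right1 := by
  simp [HasLeafNbr, isLeaf_iff, and_or_left, exists_or]

lemma isVtx_iff {x : Piece V G.edgeSet} : IsVtx G.encoding x ↔ ∃ v, x = vtx v := by
  simp only [IsVtx, hasThreeNbrs_iff, hasDegTwoNbr_iff, adj_left1]
  cases x <;> simp [encoding_adj, Meets, and_or_left, exists_or]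

lemma isMark_iff {x : Piece V G.edgeSet} : IsMark G.encoding x ↔ ∃ v, x = mark v := by
  simp only [IsMark, hasThreeNbrs_iff, hasDegTwoNbr_iff, hasLeafNbr_iff, adj_left2, adj_right1]
  cases x <;> simp [encoding_adj, Meets, and_or_left, exists_or]

lemma isLink_iff {x : Piece V G.edgeSet} : IsLink G.encoding x ↔ ∃ q, x = link q := by
  simp only [IsLink, hasThreeNbrs_iff, isVtx_iff, isMark_iff, hasDegTwoNbr_iff, hasLeafNbr_iff]
  cases x <;> simp [encoding_adj, Meets]

lemma isLeastVtxNbr_link_iff {x : Piece V G.edgeSet} {q : V ⊕ G.edgeSet} :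
    IsLeastVtxNbr G.encoding x (link q) ↔ x = vtx (lo G q) := by
  constructor
  · rintro ⟨hx, hqx, hmin⟩
    obtain ⟨b, rfl⟩ := isVtx_iff.1 hx
    have hqb : lo G q ≤ b := adj_link_vtx.1 hqx
    have hbq : b ≤ lo G q := nbhdLE_vtx_iff.1 (hmin _ (isVtx_iff.2 ⟨_, rfl⟩) (by simp))
    rw [le_antisymm hbq hqb]
  · rintro rfl
    refine ⟨isVtx_iff.2 ⟨_, rfl⟩, by simp, fun y hy hqy => ?_⟩
    obtain ⟨c, rfl⟩ := isVtx_iff.1 hy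
    exact nbhdLE_vtx_iff.2 (adj_link_vtx.1 hqy)

lemma isGreatestMarkNbr_link_iff {m : Piece V G.edgeSet} {q : V ⊕ G.edgeSet} :
    IsGreatestMarkNbr G.encoding m (link q) ↔ m = mark (hi G q) := by
  constructor
  · rintro ⟨hm, hqm, hmax⟩
    obtain ⟨b, rfl⟩ := isMark_iff.1 hm
    have hbq : b ≤ hi G q := adj_link_mark.1 hqm
    have hqb : hi G q ≤ b := nbhdLE_mark_iff.1 (hmax _ (isMark_iff.2 ⟨_, rfl⟩) (by simp))
    rw [le_antisymm hbq hqb]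
  · rintro rfl
    refine ⟨isMark_iff.2 ⟨_, rfl⟩, by simp, fun m' hm' hqm' => ?_⟩
    obtain ⟨c, rfl⟩ := isMark_iff.1 hm'
    exact nbhdLE_mark_iff.2 (adj_link_mark.1 hqm')

lemma sameVtxNbrs_link_iff {q q' : V ⊕ G.edgeSet} :
    SameVtxNbrs G.encoding (link q) (link q') ↔ lo G q = lo G q' := by
  refine ⟨fun h => ?_, fun h x hx => ?_⟩
  · have h1 := (h (vtx (lo G q)) (isVtx_iff.2 ⟨_, rfl⟩)).1 (by simp)
    have h2 := (h (vtx (lo G q')) (isVtx_iff.2 ⟨_, rfl⟩)).2 (by simp)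
    exact le_antisymm (adj_link_vtx.1 h2) (adj_link_vtx.1 h1)
  · obtain ⟨c, rfl⟩ := isVtx_iff.1 hx
    simp [h]

lemma isVtxLink_iff {x : Piece V G.edgeSet} :
    IsVtxLink G.encoding x ↔ ∃ v, x = link (.inl v) := by
  constructor
  · rintro ⟨hx, hmin⟩
    obtain ⟨v | e, rfl⟩ := isLink_iff.1 hx
    · exact ⟨v, rfl⟩
    · have := hmin (link (.inl e.1.inf)) (isLink_iff.2 ⟨_, rfl⟩) (sameVtxNbrs_link_iff.2 rfl)
        (mark e.1.sup) (isMark_iff.2 ⟨_, rfl⟩) (by simp)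
      exact absurd (adj_link_mark.1 this) (not_le.2 (inf_lt_sup_of_mem_edgeSet e.2))
  · rintro ⟨v, rfl⟩
    refine ⟨isLink_iff.2 ⟨_, rfl⟩, fun e' he' hsame m hm hvm => ?_⟩
    obtain ⟨q', rfl⟩ := isLink_iff.1 he'
    obtain ⟨c, rfl⟩ := isMark_iff.1 hm
    rw [sameVtxNbrs_link_iff, lo_inl] at hsame
    exact adj_link_mark.2 ((adj_link_mark.1 hvm).trans (hsame ▸ lo_le_hi q'))

lemma matches_iff {x m : Piece V G.edgeSet} :
    Matches G.encoding x m ↔ ∃ v, x = vtx v ∧ m = mark v := by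
  constructor
  · rintro ⟨p, hp, hx, hm⟩
    obtain ⟨v, rfl⟩ := isVtxLink_iff.1 hp
    exact ⟨v, isLeastVtxNbr_link_iff.1 hx, isGreatestMarkNbr_link_iff.1 hm⟩
  · rintro ⟨v, rfl, rfl⟩
    exact ⟨link (.inl v), isVtxLink_iff.2 ⟨v, rfl⟩, isLeastVtxNbr_link_iff.2 rfl,
      isGreatestMarkNbr_link_iff.2 rfl⟩

lemma edgeHalf_iff {x y : Piece V G.edgeSet} :
    EdgeHalf G.encoding x y ↔ ∃ e : G.edgeSet, x = vtx e.1.inf ∧ y = vtx e.1.sup := by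
  constructor
  · rintro ⟨l, hl, hnv, hx, m, hm, hym⟩
    obtain ⟨v | e, rfl⟩ := isLink_iff.1 hl
    · exact absurd (isVtxLink_iff.2 ⟨v, rfl⟩) hnv
    obtain ⟨w, rfl, rfl⟩ := matches_iff.1 hym
    rw [isLeastVtxNbr_link_iff] at hx
    rw [isGreatestMarkNbr_link_iff, mark.injEq] at hm
    exact ⟨e, hx, by rw [hm, hi_inr]⟩
  · rintro ⟨e, rfl, rfl⟩
    refine ⟨link (.inr e), isLink_iff.2 ⟨_, rfl⟩, by simp [isVtxLink_iff],
      isLeastVtxNbr_link_iff.2 rfl, mark e.1.sup, isGreatestMarkNbr_link_iff.2 rfl,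
      matches_iff.2 ⟨_, rfl, rfl⟩⟩

lemma edgeRel_vtx_iff {a b : V} : EdgeRel G.encoding (vtx a) (vtx b) ↔ G.Adj a b := by
  simp only [EdgeRel, edgeHalf_iff, vtx.injEq]
  constructor
  · rintro (⟨e, rfl, rfl⟩ | ⟨e, rfl, rfl⟩)
    · exact adj_inf_sup_of_mem_edgeSet e.2
    · exact (adj_inf_sup_of_mem_edgeSet e.2).symm
  · intro h
    rcases le_total a b with hab | hab
    · exact .inl ⟨⟨s(a, b), h⟩, by simp [hab], by simp [hab]⟩
    · exact .inr ⟨⟨s(a, b), h⟩, by simp [hab], by simp [hab]⟩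

end Piece

open Piece

section Interpretation

noncomputable def vertexFormula : Language.graph.Formula (Fin 1) := vtxF.relabel fun _ => 0

noncomputable def edgeFormula : Language.graph.Formula (Fin 2) :=
  edgeRelF.relabel fun k => if k = 0 then 0 else 1

variable {W : Type} (H : SimpleGraph W)

lemma gRealize1_vertexFormula (w : W) : gRealize1 H vertexFormula w ↔ IsVtx H w :=
  (holds_relabel H _ vtxF _).trans (holds_vtxF H _)

lemma gRealize2_edgeFormula (x y : W) : gRealize2 H edgeFormula x y ↔ EdgeRel H x y :=
  (holds_relabel H _ edgeRelF _).trans (holds_edgeRelF H _)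

lemma gRealize2_edgeFormula_comm (x y : W) :
    gRealize2 H edgeFormula x y ↔ gRealize2 H edgeFormula y x := by
  simp only [gRealize2_edgeFormula, EdgeRel, or_comm]

variable {H} {W' : Type} {H' : SimpleGraph W'}

lemma gRealize1_iso (f : H ≃g H') (ν : Language.graph.Formula (Fin 1)) (w : W) :
    gRealize1 H' ν (f w) ↔ gRealize1 H ν w :=
  holds_iso H f ν _

lemma gRealize2_iso (f : H ≃g H') (μ : Language.graph.Formula (Fin 2)) (x y : W) :
    gRealize2 H' μ (f x) (f y) ↔ gRealize2 H μ x y := by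
  have hv : ![f x, f y] = f ∘ ![x, y] := by ext i; fin_cases i <;> rfl
  exact (congrArg (Holds H' μ) hv).to_iff.trans (holds_iso H f μ _)

def interpGraphCongr (f : H ≃g H') (ν : Language.graph.Formula (Fin 1))
    (μ : Language.graph.Formula (Fin 2)) : interpGraph H ν μ ≃g interpGraph H' ν μ where
  toEquiv := f.toEquiv.subtypeEquiv fun w => (gRealize1_iso f ν w).symm
  map_rel_iff' {a b} := by
    change (interpGraph H' ν μ).Adj ⟨f a, _⟩ ⟨f b, _⟩ ↔ (interpGraph H ν μ).Adj a b
    simp only [interpGraph, SimpleGraph.fromRel_adj, ne_eq, Subtype.mk.injEq, f.injective.eq_iff,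
      Subtype.val_inj, gRealize2_iso]

variable {V : Type} [LinearOrder V] [Nontrivial V] (G : SimpleGraph V)

noncomputable def encodingIso : G ≃g interpGraph G.encoding vertexFormula edgeFormula where
  toEquiv := Equiv.ofBijective
    (fun a => ⟨vtx a, (gRealize1_vertexFormula _ _).2 (isVtx_iff.2 ⟨a, rfl⟩)⟩)
    ⟨fun a b h => vtx.inj (congrArg Subtype.val h), fun ⟨w, hw⟩ => by
      obtain ⟨a, rfl⟩ := isVtx_iff.1 ((gRealize1_vertexFormula _ _).1 hw)
      exact ⟨a, rfl⟩⟩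
  map_rel_iff' {a b} := by
    change (interpGraph _ _ _).Adj ⟨vtx a, _⟩ ⟨vtx b, _⟩ ↔ G.Adj a b
    simp only [interpGraph, SimpleGraph.fromRel_adj, gRealize2_edgeFormula, edgeRel_vtx_iff, ne_eq,
      Subtype.mk.injEq, vtx.injEq]
    exact ⟨fun h => h.2.elim id fun h' => h'.symm, fun h => ⟨h.ne, .inl h⟩⟩

end Interpretation

/-! ### Interval representations -/

section Geometry

open Set

lemma _root_.IsIntervalRep.comap {V W : Type} {G : SimpleGraph V} {ℓ r : V → ℝ}
    (h : IsIntervalRep G ℓ r) {f : W → V} (hf : Function.Injective f) :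
    IsIntervalRep (G.comap f) (ℓ ∘ f) (r ∘ f) :=
  ⟨fun w => h.lt (f w), fun u v huv => h.adj (f u) (f v) (hf.ne huv)⟩

lemma exists_mem_of_Ioo_subset_closure {L : Set ℝ} {a b : ℝ} (hab : a < b)
    (h : Ioo a b ⊆ closure L) : ∃ l ∈ L, a < l ∧ l < b := by
  have hmid : (a + b) / 2 ∈ Ioo a b := ⟨by linarith, by linarith⟩
  obtain ⟨l, hlL, hl⟩ := (closure_inter_open_nonempty_iff isOpen_Ioo).1 ⟨_, h hmid, hmid⟩
  exact ⟨l, hlL, hl⟩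

-- A real length in `(c (λ - 1), c λ)` keeps every comparison between the integer endpoints.
lemma exists_intervalRep_of_int {T : Type} {H : SimpleGraph T} {L : Set ℝ} (a b : T → ℤ)
    (hH : ∀ s t, s ≠ t → (H.Adj s t ↔ a s < b t ∧ a t < b s)) (hab : ∀ t, a t < b t)
    {c : ℝ} (hc : 0 < c)
    (hL : ∀ t, ∃ l ∈ L, c * (b t - a t - 1) < l ∧ l < c * (b t - a t)) :
    ∃ ℓ r : T → ℝ, IsIntervalRep H ℓ r ∧ ∀ t, r t - ℓ t ∈ L := by
  choose l hlL hl using hL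
  have key : ∀ s t, c * a s < c * a t + l t ↔ a s < b t := by
    intro s t
    constructor
    · intro h
      by_contra hst
      have : (b t : ℝ) ≤ a s := by exact_mod_cast not_lt.1 hst
      nlinarith [(hl t).2]
    · intro h
      have : (a s : ℝ) ≤ b t - 1 := by exact_mod_cast Int.le_sub_one_of_lt h
      nlinarith [(hl t).1]
  refine ⟨fun t => c * a t, fun t => c * a t + l t, ⟨fun t => ?_, fun s t hst => ?_⟩,
    fun t => by simpa using hlL t⟩
  · have : (a t : ℝ) + 1 ≤ b t := by exact_mod_cast hab t
    nlinarith [(hl t).1]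
  · simp only [hH s t hst, Ico_inter_Ico, nonempty_Ico, max_lt_iff, lt_min_iff, key]
    have := hab s
    have := hab t
    omega

lemma exists_nat_lt_mul_le {α β : ℝ} (hαβ : α < β) (m : ℕ) :
    ∃ D : ℕ, m < D ∧ α * (D + m) ≤ β * D := by
  obtain ⟨k, hk⟩ := exists_nat_ge (m * β / (β - α))
  rw [div_le_iff₀ (by linarith)] at hk
  refine ⟨k + m + 1, by omega, ?_⟩
  push_cast
  nlinarith [(Nat.cast_nonneg m : (0 : ℝ) ≤ m)]

section IntegerModel

variable {V : Type} [LinearOrder V] {G : SimpleGraph V} {n : ℕ} (ord : V ↪o Fin n) (D : ℕ)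

-- The vertex intervals start at `0` and end in the order of `V`, the marks start in the order
-- of `V` one length later, and the link of `q` reaches from just before the end of
-- `vtx (lo q)` to just after the start of `mark (hi q)`.
def leftEnd : Piece V G.edgeSet → ℤ
  | left2 => -3 * D
  | left1 => -2 * D
  | left0 => -D
  | vtx _ => 0
  | link q => D + 2 * (ord (lo G q) : ℕ)
  | mark v => 2 * D + 2 * (ord v : ℕ)
  | right0 => 2 * D + 2 * n
  | right1 => 3 * D + 2 * n

def rightEnd : Piece V G.edgeSet → ℤ
  | left2 => -2 * D + 1
  | left1 => -D + 1
  | left0 => 1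
  | vtx v => D + 2 * (ord v : ℕ) + 1
  | link q => 2 * D + 2 * (ord (hi G q) : ℕ) + 1
  | mark v => 3 * D + 2 * (ord v : ℕ) + 1
  | right0 => 3 * D + 2 * n + 1
  | right1 => 4 * D + 2 * n + 1

lemma encoding_adj_iff_overlap (hD : 2 * n < D) (s t : Piece V G.edgeSet) (hst : s ≠ t) :
    G.encoding.Adj s t ↔
      leftEnd ord D s < rightEnd ord D t ∧ leftEnd ord D t < rightEnd ord D s := by
  rw [encoding_adj]
  cases s <;> cases t <;> first
    | exact absurd rfl hst
    | (simp only [Piece.Meets, leftEnd, rightEnd, ne_eq, hst, not_false_eq_true, true_and,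
        false_or, or_false, or_self, true_iff, false_iff, not_and, not_lt, ← ord.le_iff_le,
        Fin.le_iff_val_le_val]; omega)

lemma rightEnd_sub_leftEnd_mem (t : Piece V G.edgeSet) :
    D + 1 ≤ rightEnd ord D t - leftEnd ord D t ∧
      rightEnd ord D t - leftEnd ord D t ≤ D + 2 * n + 1 := by
  cases t with
  | link q =>
    have := Fin.le_iff_val_le_val.1 (ord.le_iff_le.2 (lo_le_hi q))
    simp only [leftEnd, rightEnd]
    omega
  | _ => simp only [leftEnd, rightEnd]; omega

end IntegerModel

-- The integer model has lengths in `[D + 1, D + 2n + 1]`; after scaling by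
-- `c = β / (D + 2n + 1)` every window `(c (λ - 1), c λ)` lies in `(α, β)`.
lemma exists_encoding_intervalRep {V : Type} [LinearOrder V] [Fintype V] {G : SimpleGraph V}
    {L : Set ℝ} {α β : ℝ} (hβ : 0 < β) (hαβ : α < β) (hL : Ioo α β ⊆ closure L) :
    ∃ ℓ r : Piece V G.edgeSet → ℝ,
      IsIntervalRep G.encoding ℓ r ∧ ∀ t, r t - ℓ t ∈ L := by
  set n := Fintype.card V
  let ord : V ↪o Fin n := (Fintype.orderIsoFinOfCardEq V rfl).symm.toOrderEmbedding
  obtain ⟨D, hD, hαD⟩ := exists_nat_lt_mul_le hαβ (2 * n + 1)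
  push_cast at hαD
  have hDn : (0 : ℝ) < D + 2 * n + 1 := by positivity
  set c := β / (D + 2 * n + 1) with hc_def
  have hc : 0 < c := div_pos hβ hDn
  have hcD : α ≤ c * D := by
    rw [hc_def, div_mul_eq_mul_div, le_div_iff₀ hDn]
    linarith
  have hcDn : c * (D + 2 * n + 1) = β := div_mul_cancel₀ β hDn.ne'
  refine exists_intervalRep_of_int (leftEnd ord D) (rightEnd ord D)
    (encoding_adj_iff_overlap ord D (by omega))
    (fun t => by have := rightEnd_sub_leftEnd_mem ord D t; omega) hc fun t => ?_
  obtain ⟨h1, h2⟩ := rightEnd_sub_leftEnd_mem ord D t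
  have h1' : (D : ℝ) + 1 ≤ (rightEnd ord D t : ℝ) - leftEnd ord D t := by exact_mod_cast h1
  have h2' : (rightEnd ord D t : ℝ) - leftEnd ord D t ≤ D + 2 * n + 1 := by exact_mod_cast h2
  refine exists_mem_of_Ioo_subset_closure ?_ ((Ioo_subset_Ioo ?_ ?_).trans hL) <;> nlinarith

lemma exists_pos_Ioo_subset_closure {L : Set ℝ} (hL0 : ∀ x ∈ L, 0 ≤ x)
    (hdense : ∃ U : Set ℝ, IsOpen U ∧ U.Nonempty ∧ U ⊆ closure L) :
    ∃ α β : ℝ, 0 < β ∧ α < β ∧ Ioo α β ⊆ closure L := by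
  obtain ⟨U, hU, hne, hUL⟩ := hdense
  obtain ⟨α, β, hαβ, hαβU⟩ := hU.exists_Ioo_subset hne
  have hmid : 0 ≤ (α + β) / 2 :=
    closure_minimal (t := Ici 0) hL0 isClosed_Ici (hUL (hαβU ⟨by linarith, by linarith⟩))
  exact ⟨α, β, by linarith, hαβ, hαβU.trans hUL⟩

end Geometry

end IntervalInterpretation

open IntervalInterpretation

/-- If `L` is a set of non-negative reals dense in some non-empty open set, then there
is an FO graph interpretation `I = (ν, μ)` (with `μ` symmetric in every graph) such that
every finite graph `G` with `n ≥ 2` vertices and `m` edges is isomorphic to `I(H)` for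
some `L`-interval graph `H` with exactly `3n + 5 + m` vertices.  In particular, the
class of all finite graphs has a polynomially bounded FO interpretation in the class of
`L`-interval graphs. -/
theorem all_graphs_FO_interpretable_in_L_interval (L : Set ℝ)
    (hL0 : ∀ x ∈ L, (0 : ℝ) ≤ x)
    (hdense : ∃ U : Set ℝ, IsOpen U ∧ U.Nonempty ∧ U ⊆ closure L) :
    ∃ (ν : Language.graph.Formula (Fin 1)) (μ : Language.graph.Formula (Fin 2)),
      (∀ (W : Type) (H : SimpleGraph W) (x y : W),
        gRealize2 H μ x y ↔ gRealize2 H μ y x) ∧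
      ∀ (V : Type) [Fintype V] (G : SimpleGraph V), 2 ≤ Fintype.card V →
        ∃ (H : SimpleGraph (Fin (3 * Fintype.card V + 5 + G.edgeSet.ncard)))
          (ℓ r : Fin (3 * Fintype.card V + 5 + G.edgeSet.ncard) → ℝ),
          IsIntervalRep H ℓ r ∧ (∀ v, r v - ℓ v ∈ L) ∧
          Nonempty (G ≃g interpGraph H ν μ) := by
  classical
  obtain ⟨α, β, hβ, hαβ, hαβL⟩ := exists_pos_Ioo_subset_closure hL0 hdense
  refine ⟨vertexFormula, edgeFormula, fun _ => gRealize2_edgeFormula_comm, fun V _ G hn => ?_⟩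
  let _ : LinearOrder V := LinearOrder.lift' _ (Fintype.equivFin V).injective
  have : Nontrivial V := Fintype.one_lt_card_iff_nontrivial.1 hn
  obtain ⟨ℓ, r, hrep, hlen⟩ := exists_encoding_intervalRep (G := G) hβ hαβ hαβL
  let κ := (Fintype.equivFinOfCardEq (Piece.card_edgeSet G)).symm
  exact ⟨G.encoding.comap κ, ℓ ∘ κ, r ∘ κ, hrep.comap κ.injective, fun _ => hlen _,
    ⟨(encodingIso G).trans (interpGraphCongr (SimpleGraph.Iso.comap κ G.encoding).symm _ _)⟩⟩
end

section
/- Let G be a finite simple graph with an interval representation J. Then G has an interval representation J' such that the left end points of the intervals J'(v) are pairwise distinct for distinct vertices v, and for every vertex v the interval J'(v) has the same length as J(v). In particular, every finite L-interval graph has an L-representation with pairwise distinct left end points. -/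
/-- Two half-open real intervals intersect iff each left endpoint is below the
other's right endpoint. -/
lemma ico_inter_nonempty {a b c d : ℝ} (hab : a < b) (hcd : c < d) :
    (Set.Ico a b ∩ Set.Ico c d).Nonempty ↔ a < d ∧ c < b := by
  rw [Set.Ico_inter_Ico, Set.nonempty_Ico, max_lt_iff, lt_min_iff, lt_min_iff]
  constructor
  · rintro ⟨⟨h1, h2⟩, h3, h4⟩; exact ⟨h2, h3⟩
  · rintro ⟨h1, h2⟩; exact ⟨⟨hab, h1⟩, h2, hcd⟩

/-- On a finite index type, nonzero values of a real function are uniformly bounded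
away from zero. -/
lemma exists_pos_lb {I : Type} [Fintype I] (f : I → ℝ) :
    ∃ δ : ℝ, 0 < δ ∧ ∀ i, f i ≠ 0 → δ ≤ |f i| := by
  classical
  set S : Finset ℝ :=
    insert (1:ℝ) ((Finset.univ.image fun i => |f i|).filter fun x => (0:ℝ) < x) with hS
  have hne : S.Nonempty := Finset.insert_nonempty _ _
  refine ⟨S.min' hne, ?_, ?_⟩
  · rcases Finset.mem_insert.mp (S.min'_mem hne) with h | h
    · rw [h]; norm_num
    · exact (Finset.mem_filter.mp h).2
  · intro i hi
    apply S.min'_le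
    refine Finset.mem_insert_of_mem (Finset.mem_filter.mpr
      ⟨Finset.mem_image_of_mem (fun i => |f i|) (Finset.mem_univ i), ?_⟩)
    exact abs_pos.mpr hi

/-- On a finite index type, a real function is uniformly bounded (by a bound `≥ 1`). -/
lemma exists_ub {I : Type} [Fintype I] (f : I → ℝ) :
    ∃ B : ℝ, 1 ≤ B ∧ ∀ i, |f i| ≤ B := by
  classical
  set S : Finset ℝ := insert (1:ℝ) (Finset.univ.image fun i => |f i|) with hS
  have hne : S.Nonempty := Finset.insert_nonempty _ _
  refine ⟨S.max' hne, ?_, ?_⟩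
  · exact S.le_max' _ (Finset.mem_insert_self _ _)
  · intro i
    exact S.le_max' _ (Finset.mem_insert_of_mem
      (Finset.mem_image_of_mem (fun i => |f i|) (Finset.mem_univ i)))

/-- Key perturbation lemma: there is a shift `ε` such that the shifted left endpoints
are pairwise distinct while all strict inequalities `ℓ u < r v` are preserved. -/
lemma exists_eps {V : Type} [Fintype V] (ℓ r : V → ℝ) (hlt : ∀ v, ℓ v < r v) :
    ∃ ε : V → ℝ, (Function.Injective fun v => ℓ v + ε v) ∧
      ∀ u v : V, (ℓ u + ε u < r v + ε v ↔ ℓ u < r v) := by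
  classical
  -- an injective real-valued function on V
  obtain ⟨η, ηinj⟩ : ∃ η : V → ℝ, Function.Injective η := by
    refine ⟨fun v => ((Fintype.equivFin V v : ℕ) : ℝ), ?_⟩
    intro u v huv
    simp only at huv
    have h2 : (Fintype.equivFin V u : ℕ) = (Fintype.equivFin V v : ℕ) := by
      exact_mod_cast huv
    exact (Fintype.equivFin V).injective (Fin.val_injective h2)
  -- δ : minimal positive gap between a left and a right endpoint
  obtain ⟨δ, hδpos, hδle'⟩ := exists_pos_lb (fun p : V × V => r p.2 - ℓ p.1)
  have hδle : ∀ u v : V, ℓ u ≠ r v → δ ≤ |r v - ℓ u| := fun u v hne =>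
    hδle' (u, v) (sub_ne_zero.mpr fun hh => hne hh.symm)
  -- m : minimal interval length
  obtain ⟨m, hmpos, hmle'⟩ := exists_pos_lb (fun v : V => r v - ℓ v)
  have hmle : ∀ v : V, m ≤ r v - ℓ v := by
    intro v
    have h1 : r v - ℓ v ≠ 0 := by have := hlt v; intro hh; linarith
    have h2 := hmle' v h1
    rwa [abs_of_pos (by have := hlt v; linarith : (0:ℝ) < r v - ℓ v)] at h2
  -- P, Q : upper bounds
  obtain ⟨P, hP1, hPle'⟩ := exists_ub (fun p : V × V => ℓ p.1 - ℓ p.2)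
  have hPle : ∀ u v : V, |ℓ u - ℓ v| ≤ P := fun u v => hPle' (u, v)
  obtain ⟨Q, hQ1, hQle'⟩ := exists_ub (fun p : V × V => η p.1 - η p.2)
  have hQle : ∀ u v : V, |η u - η v| ≤ Q := fun u v => hQle' (u, v)
  have hPpos : (0:ℝ) < P := lt_of_lt_of_le one_pos hP1
  have hQpos : (0:ℝ) < Q := lt_of_lt_of_le one_pos hQ1
  -- g : minimal positive gap between left endpoints
  obtain ⟨g, hgpos, hgle'⟩ := exists_pos_lb (fun p : V × V => ℓ p.1 - ℓ p.2)
  have hgle : ∀ u v : V, ℓ u ≠ ℓ v → g ≤ |ℓ u - ℓ v| := fun u v hne =>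
    hgle' (u, v) (sub_ne_zero.mpr hne)
  -- the two small constants
  set a : ℝ := δ / (2 * P) with ha
  have hapos : 0 < a := div_pos hδpos (by positivity)
  have haP : a * P = δ / 2 := by
    rw [ha]; field_simp
  set M : ℝ := min (min (δ / 2) (a * m)) g with hM
  have hMpos : 0 < M :=
    lt_min (lt_min (by linarith) (mul_pos hapos hmpos)) hgpos
  set b : ℝ := M / (2 * Q) with hb
  have hbpos : 0 < b := div_pos hMpos (by positivity)
  have hbQ : b * Q = M / 2 := by
    rw [hb]; field_simp
  have hMle1 : M ≤ δ / 2 := le_trans (min_le_left _ _) (min_le_left _ _)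
  have hMle2 : M ≤ a * m := le_trans (min_le_left _ _) (min_le_right _ _)
  have hMle3 : M ≤ g := min_le_right _ _
  have hbQ1 : b * Q < δ / 2 := by rw [hbQ]; linarith
  have hbQ2 : b * Q < a * m := by rw [hbQ]; linarith
  have hbQ3 : b * Q < g := by rw [hbQ]; linarith
  clear_value a b M
  clear ha hb hM hMle1 hMle2 hMle3 hMpos hbQ hδle' hmle' hPle' hQle' hgle'
  -- the perturbation
  refine ⟨fun v => a * ℓ v + b * η v, ?_, ?_⟩
  · -- injectivity of the new left endpoints
    have hbabs : ∀ u v : V, |b * (η u - η v)| ≤ b * Q := by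
      intro u v
      rw [abs_mul, abs_of_pos hbpos]
      exact mul_le_mul_of_nonneg_left (hQle u v) hbpos.le
    intro u v huv
    simp only at huv
    by_cases hl : ℓ u = ℓ v
    · apply ηinj
      have h1 : b * η u = b * η v := by rw [hl] at huv; linarith
      exact mul_left_cancel₀ hbpos.ne' h1
    · exfalso
      have h0 : (1 + a) * (ℓ u - ℓ v) = -(b * (η u - η v)) := by ring_nf; linarith
      have h1 : |(1 + a) * (ℓ u - ℓ v)| = |b * (η u - η v)| := by
        rw [h0, abs_neg]
      have h2 : g ≤ |ℓ u - ℓ v| := hgle u v hl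
      have h3 : |ℓ u - ℓ v| ≤ (1 + a) * |ℓ u - ℓ v| := by
        nlinarith [abs_nonneg (ℓ u - ℓ v)]
      have h4 : |(1 + a) * (ℓ u - ℓ v)| = (1 + a) * |ℓ u - ℓ v| := by
        rw [abs_mul, abs_of_pos (by linarith : (0:ℝ) < 1 + a)]
      have h5 := hbabs u v
      linarith
  · -- preservation of the strict inequalities
    have hbabs : ∀ u v : V, |b * (η u - η v)| ≤ b * Q := by
      intro u v
      rw [abs_mul, abs_of_pos hbpos]
      exact mul_le_mul_of_nonneg_left (hQle u v) hbpos.le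
    have habs : ∀ u v : V,
        |(a * ℓ u + b * η u) - (a * ℓ v + b * η v)| < δ := by
      intro u v
      have he : (a * ℓ u + b * η u) - (a * ℓ v + b * η v)
          = a * (ℓ u - ℓ v) + b * (η u - η v) := by ring
      rw [he]
      calc |a * (ℓ u - ℓ v) + b * (η u - η v)|
          ≤ |a * (ℓ u - ℓ v)| + |b * (η u - η v)| := abs_add_le _ _
        _ ≤ a * P + b * Q := by
            refine add_le_add ?_ (hbabs u v)
            rw [abs_mul, abs_of_pos hapos]
            exact mul_le_mul_of_nonneg_left (hPle u v) hapos.le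
        _ < δ := by linarith
    intro u v
    constructor
    · intro hlt'
      by_contra hge
      push_neg at hge  -- r v ≤ ℓ u
      rcases eq_or_lt_of_le hge with heq | hgt
      · -- ℓ u = r v : here ε u > ε v
        have h1 : a * m ≤ a * (ℓ u - ℓ v) := by
          apply mul_le_mul_of_nonneg_left _ hapos.le
          have := hmle v; rw [heq] at this; linarith
        have h2 := hbabs u v
        have h3 : -(b * Q) ≤ b * (η u - η v) := by
          have := neg_abs_le (b * (η u - η v)); linarith
        have h4 : 0 < (a * ℓ u + b * η u) - (a * ℓ v + b * η v) := by nlinarith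
        rw [heq] at hlt'
        simp only at hlt'
        linarith
      · -- ℓ u > r v : the gap is at least δ
        have hd : δ ≤ ℓ u - r v := by
          have hx := hδle u v (by linarith : ℓ u ≠ r v)
          rwa [abs_of_neg (by linarith : r v - ℓ u < 0), neg_sub] at hx
        have hy := habs u v
        have hz := neg_abs_le ((a * ℓ u + b * η u) - (a * ℓ v + b * η v))
        simp only at hlt'
        linarith
    · intro hlt'
      have hd : δ ≤ r v - ℓ u := by
        have hx := hδle u v (by linarith : ℓ u ≠ r v)
        rwa [abs_of_pos (by linarith : 0 < r v - ℓ u)] at hx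
      have hy := habs u v
      have hz := le_abs_self ((a * ℓ u + b * η u) - (a * ℓ v + b * η v))
      simp only
      linarith

/-- Every interval representation of a finite graph can be modified, keeping the length
of each vertex's interval, so that the left end points become pairwise distinct.  (In
particular, every finite `L`-interval graph has an `L`-representation with pairwise
distinct left end points.) -/
theorem exists_rep_with_distinct_left_endpoints (V : Type) [Fintype V]
    (G : SimpleGraph V) (ℓ r : V → ℝ) (h : IsIntervalRep G ℓ r) :
    ∃ ℓ' r' : V → ℝ, IsIntervalRep G ℓ' r' ∧ Function.Injective ℓ' ∧
      ∀ v, r' v - ℓ' v = r v - ℓ v := by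
  obtain ⟨ε, hinj, hkey⟩ := exists_eps ℓ r h.lt
  refine ⟨fun v => ℓ v + ε v, fun v => r v + ε v, ⟨?_, ?_⟩, hinj, fun v => by ring⟩
  · intro v
    have := h.lt v
    linarith
  · intro u v huv
    rw [h.adj u v huv,
      ico_inter_nonempty (h.lt u) (h.lt v),
      ico_inter_nonempty (by linarith [h.lt u] : ℓ u + ε u < r u + ε u)
        (by linarith [h.lt v] : ℓ v + ε v < r v + ε v),
      hkey u v, hkey v u]
end
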